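/- Let a > 0 and c > 0, and let q(y) = (1/√(2πc))·(exp(-(y-a)²/(2c)) - exp(-(y+a)²/(2c))) for y > 0. Then ∫_{0}^{∞} y²·q(y) dy = (a² + c)·(2N(a/√c) - 1) + √(2c/π)·a·exp(-a²/(2c)), where N is the standard normal CDF. -/

import Mathlib

open MeasureTheory Real

/-- The standard normal cumulative distribution function. -/
noncomputable def stdNormalCDF (t : ℝ) : ℝ :=
  ∫ u in Set.Iio t, (1 / Real.sqrt (2 * Real.pi)) * Real.exp (-u ^ 2 / 2)

/-!
The density `q` is the difference of the `𝒩(a, c)` and `𝒩(-a, c)` densities (method of images).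
For the density `p` of `𝒩(μ, v)`, the identity `p' = -(x - μ) / v · p` shows that
`(μ² + v) Φ((x - μ) / √v) - v (x + μ) p(x)` is a primitive of `x² p(x)`; as `x² p ≥ 0`, its
integral over `(b, ∞)` is the limit of the primitive at `∞` minus its value at `b`. Subtracting
the two formulas at `b = 0` and using `Φ(-t) = 1 - Φ(t)` gives the claim.
-/

open Set Filter Topology ProbabilityTheory NNReal

lemma continuous_gaussianPDFReal (μ : ℝ) (v : ℝ≥0) : Continuous (gaussianPDFReal μ v) := by
  unfold gaussianPDFReal
  fun_prop

lemma hasDerivAt_gaussianPDFReal (μ : ℝ) (v : ℝ≥0) (x : ℝ) :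
    HasDerivAt (gaussianPDFReal μ v) (-(x - μ) / v * gaussianPDFReal μ v x) x := by
  have hexponent : HasDerivAt (fun y => -(y - μ) ^ 2 / (2 * (v : ℝ))) (-(x - μ) / v) x :=
    ((((hasDerivAt_id x).sub_const μ).pow 2).neg.div_const (2 * (v : ℝ))).congr_deriv
      (by simp only [id]; ring)
  rw [gaussianPDFReal_def]
  exact (hexponent.exp.const_mul _).congr_deriv (by ring)

lemma stdNormalCDF_eq_integral_Iic (t : ℝ) :
    stdNormalCDF t = ∫ u in Iic t, gaussianPDFReal 0 1 u := by
  rw [stdNormalCDF, ← integral_Iic_eq_integral_Iio]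
  simp [gaussianPDFReal, one_div]

lemma stdNormalCDF_eq_add_intervalIntegral (t : ℝ) :
    stdNormalCDF t = stdNormalCDF 0 + ∫ u in (0 : ℝ)..t, gaussianPDFReal 0 1 u := by
  have hi := integrable_gaussianPDFReal 0 1
  rw [stdNormalCDF_eq_integral_Iic, stdNormalCDF_eq_integral_Iic,
    ← intervalIntegral.integral_Iic_sub_Iic hi.integrableOn hi.integrableOn]
  ring

lemma hasDerivAt_stdNormalCDF (t : ℝ) : HasDerivAt stdNormalCDF (gaussianPDFReal 0 1 t) t := by
  have hc := continuous_gaussianPDFReal 0 1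
  rw [show stdNormalCDF = _ from funext stdNormalCDF_eq_add_intervalIntegral]
  exact (intervalIntegral.integral_hasDerivAt_right (hc.intervalIntegrable _ _)
    hc.aestronglyMeasurable.stronglyMeasurableAtFilter hc.continuousAt).const_add _

lemma stdNormalCDF_add_integral_Ioi (t : ℝ) :
    stdNormalCDF t + ∫ u in Ioi t, gaussianPDFReal 0 1 u = 1 := by
  have hi := integrable_gaussianPDFReal 0 1
  rw [stdNormalCDF_eq_integral_Iic, intervalIntegral.integral_Iic_add_Ioi hi.integrableOn
    hi.integrableOn, integral_gaussianPDFReal_eq_one 0 one_ne_zero]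

lemma tendsto_stdNormalCDF_atTop : Tendsto stdNormalCDF atTop (𝓝 1) := by
  have h := (intervalIntegral_tendsto_integral_Ioi 0
    (integrable_gaussianPDFReal 0 1).integrableOn tendsto_id).const_add (stdNormalCDF 0)
  rw [stdNormalCDF_add_integral_Ioi] at h
  exact h.congr fun t => (stdNormalCDF_eq_add_intervalIntegral t).symm

lemma stdNormalCDF_neg (t : ℝ) : stdNormalCDF (-t) = 1 - stdNormalCDF t := by
  have hsymm : ∫ u in Ioi t, gaussianPDFReal 0 1 u = ∫ u in Iic (-t), gaussianPDFReal 0 1 u := by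
    rw [← integral_comp_neg_Ioi]
    simp [gaussianPDFReal]
  rw [stdNormalCDF_eq_integral_Iic, ← hsymm, ← stdNormalCDF_add_integral_Ioi t]
  ring

lemma gaussianPDFReal_std_div_sqrt (μ : ℝ) {v : ℝ≥0} (hv : v ≠ 0) (x : ℝ) :
    gaussianPDFReal 0 1 ((x - μ) / √v) / √v = gaussianPDFReal μ v x := by
  have hv' : (0 : ℝ) < v := by positivity
  simp only [gaussianPDFReal, NNReal.coe_one, mul_one, sub_zero, div_pow, sq_sqrt hv'.le,
    sqrt_mul' _ hv'.le]
  field_simp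

lemma hasDerivAt_stdNormalCDF_standardize (μ : ℝ) {v : ℝ≥0} (hv : v ≠ 0) (x : ℝ) :
    HasDerivAt (fun y => stdNormalCDF ((y - μ) / √v)) (gaussianPDFReal μ v x) x := by
  rw [← gaussianPDFReal_std_div_sqrt μ hv x, div_eq_mul_one_div _ (√(v : ℝ))]
  exact (hasDerivAt_stdNormalCDF _).comp x (((hasDerivAt_id x).sub_const μ).div_const _)

lemma tendsto_sub_const_atTop (μ : ℝ) : Tendsto (fun x : ℝ => x - μ) atTop atTop :=
  (tendsto_atTop_add_const_right atTop (-μ) tendsto_id).congr fun x => (sub_eq_add_neg x μ).symm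

lemma tendsto_add_const_mul_gaussianPDFReal_atTop (μ d : ℝ) {v : ℝ≥0} (hv : v ≠ 0) :
    Tendsto (fun x => (x + d) * gaussianPDFReal μ v x) atTop (𝓝 0) := by
  have hb : 0 < 1 / (2 * (v : ℝ)) := by positivity
  have hdecay (s : ℝ) :
      Tendsto (fun x => |x - μ| ^ s * rexp (-(1 / (2 * v)) * (x - μ) ^ 2)) atTop (𝓝 0) :=
    (tendsto_rpow_abs_mul_exp_neg_mul_sq_cocompact hb s).comp
      ((tendsto_sub_const_atTop μ).mono_right atTop_le_cocompact)
  have h := ((hdecay 1).add ((hdecay 0).const_mul (μ + d))).const_mul (√(2 * π * v))⁻¹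
  rw [mul_zero, add_zero, mul_zero] at h
  refine h.congr' ?_
  filter_upwards [eventually_ge_atTop μ] with x hx
  simp only [gaussianPDFReal, abs_of_nonneg (sub_nonneg.2 hx), Real.rpow_one, Real.rpow_zero]
  ring_nf

noncomputable def gaussianSecondMomentPrimitive (μ : ℝ) (v : ℝ≥0) (x : ℝ) : ℝ :=
  (μ ^ 2 + v) * stdNormalCDF ((x - μ) / √v) - v * (x + μ) * gaussianPDFReal μ v x

section gaussianSecondMomentPrimitive

variable (μ : ℝ) {v : ℝ≥0}

lemma hasDerivAt_gaussianSecondMomentPrimitive (hv : v ≠ 0) (x : ℝ) :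
    HasDerivAt (gaussianSecondMomentPrimitive μ v) (x ^ 2 * gaussianPDFReal μ v x) x := by
  have hv' : (v : ℝ) ≠ 0 := by positivity
  refine (((hasDerivAt_stdNormalCDF_standardize μ hv x).const_mul _).sub
    ((((hasDerivAt_id x).add_const μ).const_mul (v : ℝ)).mul
      (hasDerivAt_gaussianPDFReal μ v x))).congr_deriv ?_
  simp only [id]
  field_simp
  ring

lemma tendsto_gaussianSecondMomentPrimitive_atTop (hv : v ≠ 0) :
    Tendsto (gaussianSecondMomentPrimitive μ v) atTop (𝓝 (μ ^ 2 + v)) := by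
  have hΦ := tendsto_stdNormalCDF_atTop.comp
    ((tendsto_sub_const_atTop μ).atTop_div_const (by positivity : 0 < √(v : ℝ)))
  have h := (hΦ.const_mul (μ ^ 2 + (v : ℝ))).sub
    ((tendsto_add_const_mul_gaussianPDFReal_atTop μ μ hv).const_mul (v : ℝ))
  rw [mul_one, mul_zero, sub_zero] at h
  exact h.congr fun x => by simp only [gaussianSecondMomentPrimitive, Function.comp, mul_assoc]

lemma integrableOn_Ioi_sq_mul_gaussianPDFReal (hv : v ≠ 0) (b : ℝ) :
    IntegrableOn (fun x => x ^ 2 * gaussianPDFReal μ v x) (Ioi b) :=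
  integrableOn_Ioi_deriv_of_nonneg' (fun x _ => hasDerivAt_gaussianSecondMomentPrimitive μ hv x)
    (fun x _ => mul_nonneg (sq_nonneg x) (gaussianPDFReal_nonneg μ v x))
    (tendsto_gaussianSecondMomentPrimitive_atTop μ hv)

lemma integral_Ioi_sq_mul_gaussianPDFReal (hv : v ≠ 0) (b : ℝ) :
    ∫ x in Ioi b, x ^ 2 * gaussianPDFReal μ v x
      = (μ ^ 2 + v) * (1 - stdNormalCDF ((b - μ) / √v)) + v * (b + μ) * gaussianPDFReal μ v b := by
  rw [integral_Ioi_of_hasDerivAt_of_nonneg'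
    (fun x _ => hasDerivAt_gaussianSecondMomentPrimitive μ hv x)
    (fun x _ => mul_nonneg (sq_nonneg x) (gaussianPDFReal_nonneg μ v x))
    (tendsto_gaussianSecondMomentPrimitive_atTop μ hv), gaussianSecondMomentPrimitive]
  ring

end gaussianSecondMomentPrimitive

theorem stopped_OU_second_moment_general (a c : ℝ) (hc : 0 < c) (q : ℝ → ℝ)
    (hq : q = fun y => (1 / Real.sqrt (2 * Real.pi * c)) *
      (Real.exp (-(y - a) ^ 2 / (2 * c)) - Real.exp (-(y + a) ^ 2 / (2 * c)))) :
    ∫ y in Set.Ioi (0 : ℝ), y ^ 2 * q y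
      = (a ^ 2 + c) * (2 * stdNormalCDF (a / Real.sqrt c) - 1)
        + Real.sqrt (2 * c / Real.pi) * a * Real.exp (-a ^ 2 / (2 * c)) := by
  set v : ℝ≥0 := ⟨c, hc.le⟩
  have hv : v ≠ 0 := ne_of_gt hc
  have hvc : (v : ℝ) = c := rfl
  have hq_sub :
      ∀ y, y ^ 2 * q y = y ^ 2 * gaussianPDFReal a v y - y ^ 2 * gaussianPDFReal (-a) v y := by
    intro y
    simp only [hq, gaussianPDFReal, hvc, sub_neg_eq_add]
    ring
  have hsqrt : √(2 * c / π) = 2 * c * (√(2 * π * c))⁻¹ := by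
    have hsq : 2 * c / π = (2 * c * (√(2 * π * c))⁻¹) ^ 2 := by
      rw [mul_pow, inv_pow, sq_sqrt (by positivity)]
      field_simp
    rw [hsq, sqrt_sq (by positivity)]
  simp_rw [hq_sub]
  rw [integral_sub (integrableOn_Ioi_sq_mul_gaussianPDFReal a hv 0)
      (integrableOn_Ioi_sq_mul_gaussianPDFReal (-a) hv 0),
    integral_Ioi_sq_mul_gaussianPDFReal a hv, integral_Ioi_sq_mul_gaussianPDFReal (-a) hv,
    zero_sub, zero_sub, neg_neg, neg_div, stdNormalCDF_neg, hsqrt]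
  simp only [gaussianPDFReal, hvc, zero_sub, neg_neg, neg_sq]
  ring

theorem stopped_OU_second_moment (a c : ℝ) (ha : 0 < a) (hc : 0 < c) (q : ℝ → ℝ)
    (hq : q = fun y => (1 / Real.sqrt (2 * Real.pi * c)) *
      (Real.exp (-(y - a) ^ 2 / (2 * c)) - Real.exp (-(y + a) ^ 2 / (2 * c)))) :
    ∫ y in Set.Ioi (0 : ℝ), y ^ 2 * q y
      = (a ^ 2 + c) * (2 * stdNormalCDF (a / Real.sqrt c) - 1)
        + Real.sqrt (2 * c / Real.pi) * a * Real.exp (-a ^ 2 / (2 * c)) :=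
  stopped_OU_second_moment_general a c hc q hq
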